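/- arXiv:1011.6000 — 4 statements merged into one kernel-verified Lean document; each statement's English description precedes it below -/
import Mathlib

section
/- Let (G,f) = der_θ(G,·) with θ^(n-1) = id, and let Z*(G) = {a ∈ Z(G,·) : a·θ(a)···θ^(n-1)(a) = a}. Then Z*(G) is a subgroup of (G,·), and the map q : Aut(G,f) → Aut(G,·) sending ψ = R_a φ to φ is a group homomorphism with kernel isomorphic to Z*(G); hence Aut(G,f)/Z*(G) embeds into Aut(G,·). -/
/-- The `(θ,b)`-derived `n`-ary operation on a group `G`. -/
def derOp {G : Type*} [Group G] (n : ℕ) (θ : MulAut G) (b : G) (x : Fin n → G) : G :=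
  (List.ofFn fun i : Fin n => (θ ^ (i : ℕ)) (x i)).prod * b

/-- The automorphism group of an `n`-ary groupoid `(G,f)`, as a subgroup of
the permutation group of `G`. -/
def nAryAut {G : Type*} [Group G] (n : ℕ) (f : (Fin n → G) → G) :
    Subgroup (Equiv.Perm G) where
  carrier := {ψ | ∀ x : Fin n → G, ψ (f x) = f (fun i => ψ (x i))}
  one_mem' := by intro x; simp
  mul_mem' := by
    intro ψ χ hψ hχ x
    simp only [Equiv.Perm.mul_apply, Set.mem_setOf_eq] at *
    rw [hχ, hψ]
  inv_mem' := by
    intro ψ hψ x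
    apply ψ.injective
    rw [Equiv.Perm.coe_inv, Equiv.apply_symm_apply, hψ]
    congr 1
    funext i
    rw [Equiv.apply_symm_apply]


/-!
Let `ψ` be an automorphism of `(G, f)` and `c = ψ 1`. Feeding `ψ` the tuples `(1, …, 1)`,
`(x, 1, …, 1, y)` and `(1, x, 1, …, 1)` gives `f(c, …, c) = c`, `ψ (x * y) = ψ x * c⁻¹ * ψ y`
(this is where `θ ^ (n - 1) = 1` enters) and `ψ (θ x) = c * θ (ψ x * c⁻¹)`. The second identity
says that `φ = ψ · c⁻¹` is a group automorphism, and `ψ ↦ φ` is multiplicative because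
`φ_ψ (φ_χ x) = φ_ψ (χ x / χ 1)`. If `φ = id` then `ψ = R_c`, and the third identity becomes
`θ x * c = c * θ x`, so `c` lies in `Z*(G)`.
-/

section derOp

variable {G : Type*} [Group G] {θ : MulAut G}

theorem derOp_cons {n : ℕ} (x : G) (g : Fin n → G) :
    derOp (n + 1) θ 1 (Fin.cons x g) = x * θ (derOp n θ 1 g) := by
  simp [derOp, List.ofFn_succ, map_list_prod, List.map_ofFn, Function.comp_def, pow_succ']

theorem derOp_snoc {n : ℕ} (g : Fin n → G) (y : G) :
    derOp (n + 1) θ 1 (Fin.snoc g y) = derOp n θ 1 g * (θ ^ n) y := by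
  rw [derOp, List.ofFn_succ']
  simp [derOp]

theorem derOp_const_one (n : ℕ) : derOp n θ 1 (fun _ => (1 : G)) = 1 := by
  simp [derOp]

theorem derOp_const_succ (n : ℕ) (a : G) :
    derOp (n + 1) θ 1 (fun _ => a) = a * θ (derOp n θ 1 fun _ => a) :=
  (congrArg _ (Fin.cons_self_tail _).symm).trans (derOp_cons a _)

theorem derOp_const_mul_of_mem_center {n : ℕ} (a : G) {b : G} (hb : b ∈ Subgroup.center G) :
    derOp n θ 1 (fun _ => a * b) = (derOp n θ 1 fun _ => a) * derOp n θ 1 fun _ => b := by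
  induction n with
  | zero => simp [derOp]
  | succ n ih =>
    rw [derOp_const_succ, derOp_const_succ, derOp_const_succ, ih, map_mul]
    have hcomm := Subgroup.mem_center_iff.mp hb (θ (derOp n θ 1 fun _ => a))
    calc a * b * (θ (derOp n θ 1 fun _ => a) * θ (derOp n θ 1 fun _ => b))
        = a * (b * θ (derOp n θ 1 fun _ => a)) * θ (derOp n θ 1 fun _ => b) := by group
      _ = a * θ (derOp n θ 1 fun _ => a) * (b * θ (derOp n θ 1 fun _ => b)) := by
        rw [← hcomm]; group

variable (G) in
/-- The subgroup `Z*(G)`. -/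
def centralIdempotents (n : ℕ) (θ : MulAut G) : Subgroup G where
  carrier := {a | a ∈ Subgroup.center G ∧ derOp n θ 1 (fun _ => a) = a}
  one_mem' := ⟨Subgroup.one_mem _, derOp_const_one n⟩
  mul_mem' := by
    rintro a b ⟨ha, hEa⟩ ⟨hb, hEb⟩
    exact ⟨mul_mem ha hb, by rw [derOp_const_mul_of_mem_center a hb, hEa, hEb]⟩
  inv_mem' := by
    rintro a ⟨ha, hEa⟩
    refine ⟨inv_mem ha, ?_⟩
    have h := derOp_const_mul_of_mem_center (θ := θ) (n := n) a (inv_mem ha)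
    rw [mul_inv_cancel, derOp_const_one, hEa] at h
    exact (inv_eq_of_mul_eq_one_right h.symm).symm

end derOp

section nAryAut

variable {G : Type*} [Group G] {θ : MulAut G} {n l : ℕ} {ψ : Equiv.Perm G}

theorem mem_nAryAut_iff {f : (Fin n → G) → G} :
    ψ ∈ nAryAut n f ↔ ∀ x, ψ (f x) = f (ψ ∘ x) :=
  Iff.rfl

theorem derOp_const_apply_one (hψ : ψ ∈ nAryAut n (derOp n θ 1)) :
    derOp n θ 1 (fun _ => ψ 1) = ψ 1 := by
  simpa [derOp_const_one, Function.comp_def] using (mem_nAryAut_iff.mp hψ fun _ => 1).symm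

theorem theta_derOp_const_apply_one (hψ : ψ ∈ nAryAut (l + 2) (derOp (l + 2) θ 1)) :
    θ (derOp l θ 1 fun _ => ψ 1) = (ψ 1)⁻¹ := by
  have h := derOp_const_apply_one hψ
  rw [derOp_const_succ, mul_eq_left, MulEquiv.map_eq_one_iff, derOp_const_succ] at h
  exact eq_inv_of_mul_eq_one_right h

theorem apply_mul_of_mem_nAryAut (hθ : θ ^ (l + 1) = 1)
    (hψ : ψ ∈ nAryAut (l + 2) (derOp (l + 2) θ 1)) (x y : G) :
    ψ (x * y) = ψ x * (ψ 1)⁻¹ * ψ y := by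
  have hxy : derOp (l + 2) θ 1 (Fin.snoc (Fin.cons x fun _ => 1) y) = x * y := by
    rw [derOp_snoc, derOp_cons, derOp_const_one, map_one, mul_one, hθ, MulAut.one_apply]
  have h := mem_nAryAut_iff.mp hψ (Fin.snoc (Fin.cons x fun _ => 1) y)
  rw [hxy, Fin.comp_snoc, Fin.comp_cons, Function.comp_def, derOp_snoc, derOp_cons,
    theta_derOp_const_apply_one hψ, hθ, MulAut.one_apply] at h
  exact h

theorem apply_theta_of_mem_nAryAut (hψ : ψ ∈ nAryAut (l + 2) (derOp (l + 2) θ 1)) (x : G) :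
    ψ (θ x) = ψ 1 * θ (ψ x * (ψ 1)⁻¹) := by
  have hx : derOp (l + 2) θ 1 (Fin.cons 1 (Fin.cons x fun _ => 1)) = θ x := by
    rw [derOp_cons, derOp_cons, derOp_const_one, map_one, mul_one, one_mul]
  have h := mem_nAryAut_iff.mp hψ (Fin.cons 1 (Fin.cons x fun _ => 1))
  rw [hx, Fin.comp_cons, Fin.comp_cons, Function.comp_def, derOp_cons, derOp_cons,
    theta_derOp_const_apply_one hψ] at h
  exact h

end nAryAut

section linearPart

variable {G : Type*} [Group G] {θ : MulAut G} {l : ℕ} (hθ : θ ^ (l + 1) = 1)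
  {ψ : Equiv.Perm G} (hψ : ψ ∈ nAryAut (l + 2) (derOp (l + 2) θ 1))

/-- The group automorphism `φ` in the decomposition `ψ = R_{ψ 1} ∘ φ`. -/
def mulAutOfDerOpAut : MulAut G :=
  MulEquiv.mk' (ψ.trans (Equiv.mulRight (ψ 1)⁻¹)) fun x y => by
    simp only [Equiv.trans_apply, Equiv.coe_mulRight, apply_mul_of_mem_nAryAut hθ hψ x y]
    group

theorem mulAutOfDerOpAut_apply (x : G) : mulAutOfDerOpAut hθ hψ x = ψ x * (ψ 1)⁻¹ :=
  rfl

theorem mulAutOfDerOpAut_eq {φ : MulAut G} {a : G} (h : ∀ x, ψ x = φ x * a) :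
    mulAutOfDerOpAut hθ hψ = φ := by
  ext x
  rw [mulAutOfDerOpAut_apply, h, h, map_one, one_mul, mul_inv_cancel_right]

theorem mulAutOfDerOpAut_eq_one_iff :
    mulAutOfDerOpAut hθ hψ = 1 ↔ ∃ a ∈ centralIdempotents G (l + 2) θ, ∀ x, ψ x = x * a := by
  constructor
  · intro h
    have hright (x : G) : ψ x = x * ψ 1 := by
      rw [← mul_inv_eq_iff_eq_mul, ← mulAutOfDerOpAut_apply hθ hψ, h, MulAut.one_apply]
    refine ⟨ψ 1, ⟨Subgroup.mem_center_iff.mpr fun g => ?_, derOp_const_apply_one hψ⟩, hright⟩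
    obtain ⟨x, rfl⟩ := θ.surjective g
    have h := apply_theta_of_mem_nAryAut hψ x
    rwa [hright, hright x, mul_inv_cancel_right] at h
  · rintro ⟨a, -, ha⟩
    exact mulAutOfDerOpAut_eq hθ hψ (φ := 1) ha

def mulAutOfDerOpAutHom : nAryAut (l + 2) (derOp (l + 2) θ 1) →* MulAut G where
  toFun ψ := mulAutOfDerOpAut hθ ψ.2
  map_one' := mulAutOfDerOpAut_eq hθ _ (φ := 1) (a := 1) fun _ => (mul_one _).symm
  map_mul' ψ χ := by
    ext x
    have h := map_div (mulAutOfDerOpAut hθ ψ.2) (χ.1 x) (χ.1 1)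
    simp only [mulAutOfDerOpAut_apply, div_eq_mul_inv] at h
    simp only [MulAut.mul_apply, mulAutOfDerOpAut_apply, Subgroup.coe_mul, Equiv.Perm.mul_apply, h]
    group

end linearPart

theorem aut_quotient_embeds {G : Type*} [Group G] (n : ℕ) (hn : 2 ≤ n)
    (θ : MulAut G) (hθ : θ ^ (n - 1) = 1) :
    ∃ S : Subgroup G,
      (∀ a : G, a ∈ S ↔ a ∈ Subgroup.center G ∧ derOp n θ 1 (fun _ : Fin n => a) = a) ∧
      ∃ q : nAryAut n (derOp n θ 1) →* MulAut G,
        (∀ (ψ : nAryAut n (derOp n θ 1)) (φ : MulAut G) (a : G),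
          (∀ x : G, (ψ : Equiv.Perm G) x = φ x * a) → q ψ = φ) ∧
        (∀ ψ : nAryAut n (derOp n θ 1),
          ψ ∈ q.ker ↔ ∃ a : G, a ∈ S ∧ ∀ x : G, (ψ : Equiv.Perm G) x = x * a) ∧
        Function.Injective (QuotientGroup.kerLift q) := by
  obtain ⟨l, rfl⟩ : ∃ l, n = l + 2 := ⟨n - 2, by omega⟩
  have hθ' : θ ^ (l + 1) = 1 := by simpa using hθ
  exact ⟨centralIdempotents G (l + 2) θ, fun _ => Iff.rfl, mulAutOfDerOpAutHom hθ',
    fun ψ _ _ => mulAutOfDerOpAut_eq hθ' ψ.2, fun ψ => mulAutOfDerOpAut_eq_one_iff hθ' ψ.2,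
    QuotientGroup.kerLift_injective _⟩
end

section
/- Let (G,f) = der_{θ,b}(G,·). If a ∈ G, φ ∈ Aut(G,·) satisfy f(a,...,a) = φ(b)·a and [θ,φ] = I_a (i.e., θφθ⁻¹φ⁻¹(x) = a⁻¹xa for all x), then ψ(x) = φ(x)·a is an automorphism of the n-ary group (G,f). -/
/-!
Write `A k = a · θ(a) ⋯ θ^(k-1)(a)` (`twistedPow θ a k` below). The commutator relation says
`θ ∘ φ = I_a ∘ φ ∘ θ`, and iterating it gives `θ^k ∘ φ = I_{A k} ∘ φ ∘ θ^k`. Hence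
`θ^k(φ(x) a) = (A k)⁻¹ φ(θ^k x) A (k+1)`, so the product defining `f(ψ x₁, …, ψ xₙ)`
telescopes to `φ(x₁ θ(x₂) ⋯ θ^(n-1)(xₙ)) · A n · b`, and `A n · b = f(a, …, a) = φ(b) a`.
-/

section TwistedPow

variable {G : Type*} [Group G] (θ : MulAut G) (a : G)

def twistedPow (k : ℕ) : G :=
  (List.ofFn fun i : Fin k => (θ ^ (i : ℕ)) a).prod

@[simp]
theorem twistedPow_zero : twistedPow θ a 0 = 1 := rfl

theorem twistedPow_succ (k : ℕ) : twistedPow θ a (k + 1) = twistedPow θ a k * (θ ^ k) a := by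
  rw [twistedPow, twistedPow, List.ofFn_succ', List.concat_eq_append, List.prod_append,
    List.prod_singleton]
  rfl

theorem derOp_const (n : ℕ) (b : G) : derOp n θ b (fun _ => a) = twistedPow θ a n * b := rfl

theorem apply_map_eq_conj_of_commutator (φ : MulAut G)
    (hcomm : ∀ x : G, θ (φ (θ⁻¹ (φ⁻¹ x))) = a⁻¹ * x * a) (y : G) :
    θ (φ y) = a⁻¹ * φ (θ y) * a := by
  simpa using hcomm (φ (θ y))

variable {θ a}

theorem pow_apply_map_eq_conj {φ : G → G} (hcomm : ∀ y, θ (φ y) = a⁻¹ * φ (θ y) * a)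
    (k : ℕ) (y : G) :
    (θ ^ k) (φ y) = (twistedPow θ a k)⁻¹ * φ ((θ ^ k) y) * twistedPow θ a k := by
  induction k generalizing y with
  | zero => simp
  | succ k ih =>
    rw [pow_succ, MulAut.mul_apply, MulAut.mul_apply, hcomm, map_mul, map_mul, map_inv, ih,
      twistedPow_succ]
    group

theorem prod_ofFn_pow_apply_map_mul {F : Type*} [FunLike F G G] [MonoidHomClass F G G] {φ : F}
    (hcomm : ∀ y, θ (φ y) = a⁻¹ * φ (θ y) * a) (k : ℕ) (x : Fin k → G) :
    (List.ofFn fun i : Fin k => (θ ^ (i : ℕ)) (φ (x i) * a)).prod =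
      φ (List.ofFn fun i : Fin k => (θ ^ (i : ℕ)) (x i)).prod * twistedPow θ a k := by
  induction k with
  | zero => simp
  | succ k ih =>
    simp only [List.ofFn_succ', List.concat_eq_append, List.prod_append, List.prod_singleton,
      Fin.val_castSucc, Fin.val_last]
    rw [ih, map_mul, map_mul, pow_apply_map_eq_conj hcomm, twistedPow_succ]
    group

end TwistedPow

theorem Ra_phi_is_automorphism_general_general {G : Type*} [Group G] (n : ℕ)
    (θ : MulAut G) (b : G)
    (a : G) (φ : MulAut G)
    (ha : derOp n θ b (fun _ : Fin n => a) = φ b * a)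
    (hcomm : ∀ x : G, θ (φ (θ⁻¹ (φ⁻¹ x))) = a⁻¹ * x * a) :
    Function.Bijective (fun x : G => φ x * a) ∧
    ∀ x : Fin n → G,
      φ (derOp n θ b x) * a = derOp n θ b (fun i => φ (x i) * a) := by
  refine ⟨(Equiv.mulRight a).bijective.comp φ.bijective, fun x => ?_⟩
  rw [derOp_const] at ha
  rw [derOp, derOp, prod_ofFn_pow_apply_map_mul (apply_map_eq_conj_of_commutator θ a φ hcomm),
    map_mul, mul_assoc, mul_assoc, ha]

theorem Ra_phi_is_automorphism_general {G : Type*} [Group G] (n : ℕ) (hn : 2 ≤ n)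
    (θ : MulAut G) (b : G) (hb : θ b = b)
    (hconj : ∀ x : G, (θ ^ (n - 1)) x = b * x * b⁻¹)
    (a : G) (φ : MulAut G)
    (ha : derOp n θ b (fun _ : Fin n => a) = φ b * a)
    (hcomm : ∀ x : G, θ (φ (θ⁻¹ (φ⁻¹ x))) = a⁻¹ * x * a) :
    Function.Bijective (fun x : G => φ x * a) ∧
    ∀ x : Fin n → G,
      φ (derOp n θ b x) * a = derOp n θ b (fun i => φ (x i) * a) :=
  Ra_phi_is_automorphism_general_general n θ b a φ ha hcomm
end

section
/- Let (G,f) = der_{θ,b}(G,·) and (H,*) a group with derived n-ary operation h(y₁,...,yₙ) = y₁*···*yₙ. Suppose a ∈ H and φ : (G,·) → (H,*) is a group homomorphism with a^(n-1) = φ(b) and φ∘θ = I_{a⁻¹}∘φ, where I_{a⁻¹}(y) = a*y*a⁻¹. Then ψ(x) = φ(x)*a satisfies ψ(f(x₁,...,xₙ)) = ψ(x₁)*ψ(x₂)*···*ψ(xₙ), i.e., ψ is an n-ary homomorphism (G,f) → der^n(H,*). Conversely, every n-ary homomorphism ψ : (G,f) → der^n(H,*) arises this way with a = ψ(1) and φ(x)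 = ψ(x)*a⁻¹. -/
/-!
Forward: if `φ ∘ θ = I_a ∘ φ` then `φ ∘ θ^k = I_{a^k} ∘ φ`, so in
`φ(x₁) a φ(x₂) a ⋯ φ(xₙ) a` each `φ(xᵢ)` can be moved past the `a`'s to its left, turning it into
`φ(θ^{i-1} xᵢ)`, and what is left is `φ(x₁ θ(x₂) ⋯ θ^{n-1}(xₙ)) aⁿ = φ(f(x)) φ(b) a`.

Converse: feeding `ψ` the tuples `(x, y, 1, …, 1)` gives `ψ(x θ(y) b) = ψ(x) ψ(y) c` with
`c = ψ(1)^{n-2}`. Comparing this with the case `y = 1` applied to `x θ(y)` cancels `b` and `c`: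
`ψ(x θ(y)) = ψ(x) ψ(y) ψ(1)⁻¹`. Taking `x = 1` gives the twisting rule for `θ`, and substituting
`y ↦ θ⁻¹ y` shows that `g ↦ ψ(g) ψ(1)⁻¹` is multiplicative.
-/

section Forward

variable {G H : Type*} [Group G] [Group H] {θ : MulAut G} {φ : G →* H} {a : H}

theorem map_pow_apply_eq_conj (hφθ : ∀ x, φ (θ x) = a * φ x * a⁻¹) (k : ℕ) (x : G) :
    φ ((θ ^ k) x) = a ^ k * φ x * (a ^ k)⁻¹ := by
  induction k with
  | zero => simp
  | succ k ih => rw [pow_succ', MulAut.mul_apply, hφθ, ih, pow_succ']; group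

theorem prod_ofFn_map_mul_eq (hφθ : ∀ x, φ (θ x) = a * φ x * a⁻¹) {n : ℕ} (x : Fin n → G) :
    (List.ofFn fun i => φ (x i) * a).prod
      = φ (List.ofFn fun i : Fin n => (θ ^ (i : ℕ)) (x i)).prod * a ^ n := by
  induction n with
  | zero => simp
  | succ n ih =>
    rw [List.ofFn_succ', List.prod_concat, ih, List.ofFn_succ', List.prod_concat, map_mul,
      map_pow_apply_eq_conj hφθ]
    simp only [Fin.val_castSucc, Fin.val_last]
    group

end Forward

section Converse

variable {G H : Type*} [Group G] [Group H]

theorem derOp_cons_cons_one (θ : MulAut G) (b x y : G) (m : ℕ) :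
    derOp (m + 2) θ b (Fin.cons x (Fin.cons y 1)) = x * θ y * b := by
  simp [derOp, List.ofFn_succ, List.ofFn_const]

theorem prod_ofFn_cons_cons_one (ψ : G → H) (x y : G) (m : ℕ) :
    (List.ofFn fun i => ψ ((Fin.cons x (Fin.cons y 1) : Fin (m + 2) → G) i)).prod
      = ψ x * ψ y * ψ 1 ^ m := by
  simp [List.ofFn_succ, List.ofFn_const, mul_assoc]

variable {θ : MulAut G} {b : G} {c : H} {ψ : G → H}

theorem apply_mul_apply_eq (hψ : ∀ x y, ψ (x * θ y * b) = ψ x * ψ y * c) (x y : G) :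
    ψ (x * θ y) = ψ x * ψ y * (ψ 1)⁻¹ := by
  have h := hψ (x * θ y) 1
  rw [map_one, mul_one, hψ] at h
  rw [eq_mul_inv_iff_mul_eq]
  exact (mul_right_cancel h).symm

theorem apply_apply_eq_conj (hψ : ∀ x y, ψ (x * θ y * b) = ψ x * ψ y * c) (y : G) :
    ψ (θ y) = ψ 1 * ψ y * (ψ 1)⁻¹ := by
  simpa using apply_mul_apply_eq hψ 1 y

theorem apply_mul_eq (hψ : ∀ x y, ψ (x * θ y * b) = ψ x * ψ y * c) (x y : G) :
    ψ (x * y) = ψ x * (ψ 1)⁻¹ * ψ y := by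
  calc ψ (x * y) = ψ x * ψ (θ⁻¹ y) * (ψ 1)⁻¹ := by
        simpa using apply_mul_apply_eq hψ x (θ⁻¹ y)
    _ = ψ x * (ψ 1)⁻¹ * (ψ 1 * ψ (θ⁻¹ y) * (ψ 1)⁻¹) := by group
    _ = ψ x * (ψ 1)⁻¹ * ψ y := by rw [← apply_apply_eq_conj hψ, MulAut.apply_inv_self]

def homOfTwistedMul (hψ : ∀ x y, ψ (x * θ y * b) = ψ x * ψ y * c) : G →* H :=
  MonoidHom.mk' (fun g => ψ g * (ψ 1)⁻¹) fun x y => by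
    simp only [apply_mul_eq hψ x y]; group

theorem homOfTwistedMul_apply (hψ : ∀ x y, ψ (x * θ y * b) = ψ x * ψ y * c) (g : G) :
    homOfTwistedMul hψ g = ψ g * (ψ 1)⁻¹ :=
  rfl

end Converse

theorem hom_to_derived_group_general {G H : Type*} [Group G] [Group H]
    (n : ℕ) (hn : 2 ≤ n) (θ : MulAut G) (b : G) :
    (∀ (φ : G →* H) (a : H), a ^ (n - 1) = φ b →
      (∀ x : G, φ (θ x) = a * φ x * a⁻¹) →
      ∀ x : Fin n → G,
        φ (derOp n θ b x) * a = (List.ofFn fun i => φ (x i) * a).prod) ∧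
    (∀ ψ : G → H,
      (∀ x : Fin n → G, ψ (derOp n θ b x) = (List.ofFn fun i => ψ (x i)).prod) →
      ∃ (φ : G →* H) (a : H),
        a = ψ 1 ∧ (∀ g : G, φ g = ψ g * a⁻¹) ∧ (∀ g : G, ψ g = φ g * a) ∧
        a ^ (n - 1) = φ b ∧ ∀ x : G, φ (θ x) = a * φ x * a⁻¹) := by
  obtain ⟨m, rfl⟩ : ∃ m, n = m + 2 := ⟨n - 2, by omega⟩
  refine ⟨fun φ a ha hφθ x => ?_, fun ψ hψ => ?_⟩
  · rw [prod_ofFn_map_mul_eq hφθ, derOp, map_mul, ← ha, mul_assoc, ← pow_succ,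
      Nat.sub_add_cancel (by omega)]
  have hE : ∀ x y, ψ (x * θ y * b) = ψ x * ψ y * ψ 1 ^ m := fun x y => by
    rw [← derOp_cons_cons_one, hψ, prod_ofFn_cons_cons_one]
  refine ⟨homOfTwistedMul hE, ψ 1, rfl, fun _ => rfl, fun g => ?_, ?_, fun x => ?_⟩
  · rw [homOfTwistedMul_apply, inv_mul_cancel_right]
  · have hb := hE 1 1
    simp only [map_one, mul_one, one_mul] at hb
    rw [homOfTwistedMul_apply, hb, show m + 2 - 1 = m + 1 from rfl, pow_succ']
    group
  · rw [homOfTwistedMul_apply, homOfTwistedMul_apply, apply_apply_eq_conj hE]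
    group

theorem hom_to_derived_group {G H : Type*} [Group G] [Group H]
    (n : ℕ) (hn : 2 ≤ n) (θ : MulAut G) (b : G) (hb : θ b = b)
    (hconj : ∀ x : G, (θ ^ (n - 1)) x = b * x * b⁻¹) :
    (∀ (φ : G →* H) (a : H), a ^ (n - 1) = φ b →
      (∀ x : G, φ (θ x) = a * φ x * a⁻¹) →
      ∀ x : Fin n → G,
        φ (derOp n θ b x) * a = (List.ofFn fun i => φ (x i) * a).prod) ∧
    (∀ ψ : G → H,
      (∀ x : Fin n → G, ψ (derOp n θ b x) = (List.ofFn fun i => ψ (x i)).prod) →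
      ∃ (φ : G →* H) (a : H),
        a = ψ 1 ∧ (∀ g : G, φ g = ψ g * a⁻¹) ∧ (∀ g : G, ψ g = φ g * a) ∧
        a ^ (n - 1) = φ b ∧ ∀ x : G, φ (θ x) = a * φ x * a⁻¹) :=
  hom_to_derived_group_general n hn θ b
end

section
/- Every n-ary homomorphism ψ from (G,f) = der_{θ,b}(G,·) to an n-ary group (H,h) = der_{η,c}(H,*) with (H,*) abelian has the form ψ(x) = φ(x)*a, where φ : (G,·) → (H,*) is a group homomorphism satisfying φ∘θ = η∘φ, and a ∈ H satisfies h(a,...,a) = a*φ(b). -/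
/-!
Feeding the tuples `(g, h, 1, …, 1)` to the `n`-ary identity reduces it to the binary identity
`ψ (g * θ h * b) = ψ g * η (ψ h) * R` with `R` independent of `g, h`. As `h ↦ θ h * b` is onto,
`ψ (p * q)` is `ψ p` times a function of `q`, whence `ψ (p * q) * ψ 1 = ψ p * ψ q` and
`φ := ψ / ψ 1` is a homomorphism; take `a := ψ 1`. Writing `θ x * b` both as `1 * θ x * b` and as
`θ x * θ 1 * b` gives `φ ∘ θ = η ∘ φ`, and the constant tuple `1` gives `h(a, …, a) = ψ b = a * φ b`.
-/

theorem Fin.cons_one_one {α : Type*} [One α] (n : ℕ) : (Fin.cons 1 1 : Fin (n + 1) → α) = 1 := by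
  ext i
  exact Fin.cases rfl (fun _ => rfl) i

section

variable {G H : Type*} [Group G] [CommGroup H]

theorem derOp_one (n : ℕ) (θ : MulAut G) (b : G) : derOp n θ b 1 = b := by
  simp [derOp]

theorem derOp_cons_cons (m : ℕ) (θ : MulAut G) (b g h : G) (z : Fin m → G) :
    derOp (m + 2) θ b (Fin.cons g (Fin.cons h z)) =
      g * θ h * derOp (m + 2) θ b (Fin.cons 1 (Fin.cons 1 z)) := by
  simp [derOp, List.ofFn_succ, mul_assoc]

theorem map_mul_mul_map_one {ψ F : G → H} (h : ∀ p q, ψ (p * q) = ψ p * F q) (p q : G) :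
    ψ (p * q) * ψ 1 = ψ p * ψ q := by
  have hF := h 1 q
  rw [one_mul] at hF
  rw [h, hF, mul_left_comm, mul_comm]

def MonoidHom.ofMapMulMulMapOne (ψ : G → H) (h : ∀ p q, ψ (p * q) * ψ 1 = ψ p * ψ q) :
    G →* H where
  toFun g := ψ g / ψ 1
  map_one' := div_self' _
  map_mul' p q := by
    rw [div_mul_div_comm, ← h, mul_div_mul_right_eq_div]

theorem exists_intertwining_monoidHom_of_map_mul_mul (θ : MulAut G) (η : MulAut H) (b : G)
    (R : H) (ψ : G → H) (hψ : ∀ g h, ψ (g * θ h * b) = ψ g * η (ψ h) * R) :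
    ∃ φ : G →* H, (∀ g, ψ g = φ g * ψ 1) ∧ ∀ x, φ (θ x) = η (φ x) := by
  have hsplit : ∀ q, θ (θ.symm (q * b⁻¹)) * b = q := by simp
  have hmul : ∀ p q, ψ (p * q) = ψ p * (η (ψ (θ.symm (q * b⁻¹))) * R) := fun p q => by
    rw [← mul_assoc, ← hψ, mul_assoc, hsplit]
  refine ⟨MonoidHom.ofMapMulMulMapOne ψ (map_mul_mul_map_one hmul),
    fun g => (div_mul_cancel (ψ g) (ψ 1)).symm, fun x => ?_⟩
  have hθx : ψ (θ x) * η (ψ 1) = ψ 1 * η (ψ x) := by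
    have h1 := hψ 1 x
    have h2 := hψ (θ x) 1
    rw [one_mul] at h1
    rw [map_one, mul_one, h1] at h2
    exact mul_right_cancel h2.symm
  simp only [MonoidHom.ofMapMulMulMapOne, MonoidHom.coe_mk, OneHom.coe_mk, map_div]
  rw [div_eq_div_iff_mul_eq_mul, hθx, mul_comm]

end

theorem hom_to_abelian_derived_structure_general {G H : Type*} [Group G] [CommGroup H]
    (n : ℕ) (hn : 2 ≤ n)
    (θ : MulAut G) (b : G)
    (η : MulAut H) (c : H)
    (ψ : G → H)
    (hψ : ∀ x : Fin n → G,
      ψ (derOp n θ b x) = derOp n η c (fun i => ψ (x i))) :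
    ∃ (φ : G →* H) (a : H),
      (∀ g : G, ψ g = φ g * a) ∧
      (∀ x : G, φ (θ x) = η (φ x)) ∧
      derOp n η c (fun _ : Fin n => a) = a * φ b := by
  obtain ⟨m, rfl⟩ : ∃ m, n = m + 2 := ⟨n - 2, by omega⟩
  have hbinary : ∀ g h, ψ (g * θ h * b) =
      ψ g * η (ψ h) * derOp (m + 2) η c (Fin.cons 1 (Fin.cons 1 fun _ => ψ 1)) := by
    intro g h
    have := hψ (Fin.cons g (Fin.cons h 1))
    rwa [derOp_cons_cons, Fin.cons_one_one, Fin.cons_one_one, derOp_one, ← Function.comp_def,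
      Fin.comp_cons, Fin.comp_cons, derOp_cons_cons] at this
  obtain ⟨φ, hψφ, hφθ⟩ := exists_intertwining_monoidHom_of_map_mul_mul θ η b _ ψ hbinary
  refine ⟨φ, ψ 1, hψφ, hφθ, ?_⟩
  calc derOp (m + 2) η c (fun _ => ψ 1) = ψ (derOp (m + 2) θ b 1) := (hψ 1).symm
    _ = ψ 1 * φ b := by rw [derOp_one, hψφ, mul_comm]

theorem hom_to_abelian_derived_structure {G H : Type*} [Group G] [CommGroup H]
    (n : ℕ) (hn : 2 ≤ n)
    (θ : MulAut G) (b : G) (hb : θ b = b)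
    (hconj : ∀ x : G, (θ ^ (n - 1)) x = b * x * b⁻¹)
    (η : MulAut H) (c : H) (hc : η c = c) (hη : η ^ (n - 1) = 1)
    (ψ : G → H)
    (hψ : ∀ x : Fin n → G,
      ψ (derOp n θ b x) = derOp n η c (fun i => ψ (x i))) :
    ∃ (φ : G →* H) (a : H),
      (∀ g : G, ψ g = φ g * a) ∧
      (∀ x : G, φ (θ x) = η (φ x)) ∧
      derOp n η c (fun _ : Fin n => a) = a * φ b :=
  hom_to_abelian_derived_structure_general n hn θ b η c ψ hψ
end
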